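/- For θ = 2 and τ = 1/2, the SBM limited slope coincides with the Minmod2 slope: for any real numbers a = (Γⱼ − Γⱼ₋₁)/Δx and b = (Γⱼ₊₁ − Γⱼ)/Δx with a ≠ 0, one has φ^{SBM}_{2,1/2}(b/a) · a = minmod(2a, (a+b)/2, 2b). -/

import Mathlib

/-!
For `τ = 1/2` the two branches of `sbm` agree: for `r > 0` and `θ ≥ 0` both equal
`min θ ((1 + r)/2) (θ r)`, so `sbm 2 (1/2) r = minmod(2, (1 + r)/2, 2r)` for every `r`.
Since `minmod` is homogeneous of degree one under multiplication by any real `c`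
(a negative `c` swaps its `min` and `max` branches), multiplying by `a` with `b = a r`
gives the theorem.
-/

noncomputable def sbm (θ τ r : ℝ) : ℝ :=
  if r ≤ 0 then 0
  else if r ≤ 1 then min (θ * r) (1 + τ * (r - 1))
  else r * min (θ / r) (1 + τ * (1 / r - 1))

noncomputable def minmod3 (a b c : ℝ) : ℝ :=
  if 0 < a ∧ 0 < b ∧ 0 < c then min a (min b c)
  else if a < 0 ∧ b < 0 ∧ c < 0 then max a (max b c) else 0

theorem sbm_of_nonpos (θ τ : ℝ) {r : ℝ} (hr : r ≤ 0) : sbm θ τ r = 0 := if_pos hr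

theorem sbm_half_of_pos {θ r : ℝ} (hθ : 0 ≤ θ) (hr : 0 < r) :
    sbm θ (1 / 2) r = min θ (min ((1 + r) / 2) (θ * r)) := by
  rw [sbm, if_neg hr.not_ge]
  split_ifs with hr1
  · have : θ * r ≤ θ := mul_le_of_le_one_right hθ hr1
    rw [min_left_comm, min_eq_right this, min_comm]
    congr 1; ring
  · have : θ ≤ θ * r := le_mul_of_one_le_right hθ (not_le.mp hr1).le
    rw [min_comm ((1 + r) / 2), ← min_assoc, min_eq_left this, mul_min_of_nonneg _ _ hr.le]
    congr 1
    · field_simp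
    · field_simp; ring

theorem minmod3_mul_of_pos {c : ℝ} (hc : 0 < c) (x y z : ℝ) :
    minmod3 (c * x) (c * y) (c * z) = c * minmod3 x y z := by
  have hneg (t : ℝ) : c * t < 0 ↔ t < 0 := by simpa using smul_neg_iff_of_pos_left hc (b := t)
  simp only [minmod3, mul_pos_iff_of_pos_left hc, hneg]
  split_ifs <;> simp [mul_min_of_nonneg, mul_max_of_nonneg, hc.le]

theorem minmod3_neg (x y z : ℝ) : minmod3 (-x) (-y) (-z) = -minmod3 x y z := by
  simp only [minmod3, neg_pos, neg_lt_zero]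
  split_ifs with h1 h2 <;> first | linarith [h1.1, h2.1] | simp [min_neg_neg, max_neg_neg]

theorem minmod3_mul (c x y z : ℝ) :
    minmod3 (c * x) (c * y) (c * z) = c * minmod3 x y z := by
  rcases lt_trichotomy c 0 with hc | rfl | hc
  · have h := minmod3_mul_of_pos (neg_pos.mpr hc) (-x) (-y) (-z)
    simpa only [neg_mul_neg, minmod3_neg, mul_neg, neg_mul, neg_neg] using h
  · simp [minmod3]
  · exact minmod3_mul_of_pos hc x y z

theorem sbm_two_half_eq_minmod3 (r : ℝ) :
    sbm 2 (1 / 2) r = minmod3 2 ((1 + r) / 2) (2 * r) := by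
  rcases le_or_gt r 0 with hr | hr
  · rw [sbm_of_nonpos _ _ hr, minmod3, if_neg (fun h => by linarith [h.2.2]),
      if_neg (fun h => by linarith [h.1])]
  · rw [sbm_half_of_pos zero_le_two hr, minmod3, if_pos ⟨two_pos, by positivity, by positivity⟩]

theorem sbm_minmod2 (a b : ℝ) (ha : a ≠ 0) :
    sbm 2 (1 / 2) (b / a) * a = minmod3 (2 * a) ((a + b) / 2) (2 * b) := by
  obtain ⟨r, rfl⟩ : ∃ r, b = a * r := ⟨b / a, (mul_div_cancel₀ b ha).symm⟩
  have hslopes : minmod3 (2 * a) ((a + a * r) / 2) (2 * (a * r))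
      = minmod3 (a * 2) (a * ((1 + r) / 2)) (a * (2 * r)) := by ring_nf
  rw [mul_div_cancel_left₀ r ha, hslopes, minmod3_mul, sbm_two_half_eq_minmod3, mul_comm]
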